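/- arXiv:2602.13970 — 5 statements merged into one kernel-verified Lean document; each statement's English description precedes it below -/
import Mathlib

section
/- Every finite d-degenerate graph is ((d+1)m, m)-choosable for every positive integer m. -/
/-!
Greedy colouring along a degeneracy ordering: remove a vertex `v` of degree at most `d`, choose
`m`-sets for the rest by induction, and give `v` any `m` colours of its list avoiding the at most
`d * m` colours used by its neighbours; a list of `(d + 1) * m` colours leaves at least `m`.
-/

/-- `G` is `d`-degenerate: every nonempty (induced) subgraph has a vertex of
degree at most `d`. -/
def Degenerate {V : Type*} [DecidableEq V] (G : SimpleGraph V) [DecidableRel G.Adj]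
    (d : ℕ) : Prop :=
  ∀ s : Finset V, s.Nonempty → ∃ v ∈ s, (s.filter fun w => G.Adj v w).card ≤ d

/-- `G` is `(a,b)`-choosable. -/
def ChoosableAB {V : Type*} (G : SimpleGraph V) (a b : ℕ) : Prop :=
  ∀ L : V → Finset ℕ, (∀ v, (L v).card = a) →
    ∃ C : V → Finset ℕ, (∀ v, C v ⊆ L v) ∧ (∀ v, (C v).card = b) ∧
      ∀ u v, G.Adj u v → Disjoint (C u) (C v)

open Finset Function

lemma exists_subset_card_eq_disjoint_biUnion {V α : Type*} [DecidableEq α] {L : Finset α}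
    {N : Finset V} {C : V → Finset α} {d m : ℕ} (hN : #N ≤ d) (hC : ∀ w ∈ N, #(C w) = m)
    (hL : d * m + m ≤ #L) :
    ∃ D ⊆ L, #D = m ∧ Disjoint D (N.biUnion C) := by
  have hused : #(N.biUnion C) ≤ d * m :=
    (card_biUnion_le_card_mul N C m fun w hw => (hC w hw).le).trans (Nat.mul_le_mul_right m hN)
  have hfree : m ≤ #(L \ N.biUnion C) := by
    have := le_card_sdiff (N.biUnion C) L
    omega
  obtain ⟨D, hDsub, hDcard⟩ := exists_subset_card_eq hfree
  exact ⟨D, hDsub.trans sdiff_subset, hDcard, disjoint_of_subset_left hDsub sdiff_disjoint⟩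

namespace SimpleGraph

variable {V α : Type*} (G : SimpleGraph V)

def IsSetChoiceOn (L : V → Finset α) (m : ℕ) (s : Finset V) (C : V → Finset α) : Prop :=
  (∀ v ∈ s, C v ⊆ L v) ∧ (∀ v ∈ s, #(C v) = m) ∧
    ∀ u ∈ s, ∀ w ∈ s, G.Adj u w → Disjoint (C u) (C w)

variable {G} [DecidableEq V] [DecidableEq α]

lemma IsSetChoiceOn.extend [DecidableRel G.Adj] {L : V → Finset α} {m d : ℕ} {s : Finset V}
    {v : V} {C : V → Finset α} (hC : G.IsSetChoiceOn L m (s.erase v) C)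
    (hv : #(s.filter fun w => G.Adj v w) ≤ d) (hL : d * m + m ≤ #(L v)) :
    ∃ C', G.IsSetChoiceOn L m s C' := by
  obtain ⟨hCL, hCcard, hCdisj⟩ := hC
  set N := (s.erase v).filter fun w => G.Adj v w
  have hN : #N ≤ d := (card_le_card (filter_subset_filter _ (erase_subset v s))).trans hv
  obtain ⟨D, hDL, hDcard, hDN⟩ := exists_subset_card_eq_disjoint_biUnion hN
    (fun w hw => hCcard w (mem_of_mem_filter w hw)) hL
  have hDnbr : ∀ w ∈ s, w ≠ v → G.Adj v w → Disjoint D (C w) := fun w hw hwv hvw =>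
    hDN.mono_right (subset_biUnion_of_mem C (mem_filter.2 ⟨mem_erase.2 ⟨hwv, hw⟩, hvw⟩))
  refine ⟨update C v D, fun w hw => ?_, fun w hw => ?_, fun u hu w hw huw => ?_⟩
  · rcases eq_or_ne w v with rfl | hwv
    · simpa using hDL
    · simpa [hwv] using hCL w (mem_erase.2 ⟨hwv, hw⟩)
  · rcases eq_or_ne w v with rfl | hwv
    · simpa using hDcard
    · simpa [hwv] using hCcard w (mem_erase.2 ⟨hwv, hw⟩)
  · rcases eq_or_ne u v with rfl | huv
    · rw [update_self, update_of_ne huw.ne.symm]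
      exact hDnbr w hw huw.ne.symm huw
    rcases eq_or_ne w v with rfl | hwv
    · rw [update_self, update_of_ne huv]
      exact (hDnbr u hu huv huw.symm).symm
    rw [update_of_ne huv, update_of_ne hwv]
    exact hCdisj u (mem_erase.2 ⟨huv, hu⟩) w (mem_erase.2 ⟨hwv, hw⟩) huw

end SimpleGraph

lemma Degenerate.exists_isSetChoiceOn {V α : Type*} [DecidableEq V] [DecidableEq α]
    {G : SimpleGraph V} [DecidableRel G.Adj] {d m : ℕ} (hG : Degenerate G d)
    {L : V → Finset α} (hL : ∀ v, d * m + m ≤ #(L v)) (s : Finset V) :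
    ∃ C, G.IsSetChoiceOn L m s C := by
  induction s using strongInduction with
  | _ s ih =>
    rcases s.eq_empty_or_nonempty with rfl | hs
    · exact ⟨fun _ => ∅, by simp [SimpleGraph.IsSetChoiceOn]⟩
    obtain ⟨v, hv, hvdeg⟩ := hG s hs
    obtain ⟨C, hC⟩ := ih (s.erase v) (erase_ssubset hv)
    exact hC.extend hvdeg (hL v)

theorem stmt_4 {V : Type*} [Fintype V] [DecidableEq V] (G : SimpleGraph V)
    [DecidableRel G.Adj] (d : ℕ) (hdeg : Degenerate G d) :
    ∀ m : ℕ, 0 < m → ChoosableAB G ((d + 1) * m) m := by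
  intro m _ L hL
  obtain ⟨C, hCL, hCcard, hCdisj⟩ :=
    hdeg.exists_isSetChoiceOn (fun v => by rw [hL v, Nat.succ_mul]) univ
  exact ⟨C, fun v => hCL v (mem_univ v), fun v => hCcard v (mem_univ v),
    fun u v huv => hCdisj u (mem_univ u) v (mem_univ v) huv⟩
end

section
/- Let m be a positive integer and let v1v2v3 be the path P3 with lists L(v1), L(v2), L(v3) each of size 7m. If P3 admits an (L, 4m)-coloring, then there exist an m-element set A ⊆ L(v1) \ L(v2), an m-element set C ⊆ L(v3) \ L(v2), and a 2m-element set B ⊆ L(v2) containing an m-element subset of L(v2) \ L(v1) and an m-element subset of L(v2) \ L(v3). -/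
/-- If `X` has `4m` elements, `Y` has `7m` elements, and `X` is disjoint from a
`4m`-element subset `Z` of `Y`, then `X \ Y` has at least `m` elements. -/
lemma aux_sdiff_card (m : ℕ) (X Y Z : Finset ℕ) (hX : X.card = 4 * m)
    (hY : Y.card = 7 * m) (hZY : Z ⊆ Y) (hZ : Z.card = 4 * m)
    (hd : Disjoint X Z) : m ≤ (X \ Y).card := by
  have h1 : X ∩ Y ⊆ Y \ Z := by
    intro x hx
    simp only [Finset.mem_inter] at hx
    refine Finset.mem_sdiff.2 ⟨hx.2, fun hz => ?_⟩
    exact Finset.disjoint_left.1 hd hx.1 hz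
  have h2 : (Y \ Z).card = 7 * m - 4 * m := by
    rw [Finset.card_sdiff_of_subset hZY, hY, hZ]
  have h3 := Finset.card_le_card h1
  have h4 : (X ∩ Y).card + (X \ Y).card = X.card := Finset.card_inter_add_card_sdiff X Y
  omega

/-- For the path `P3 = v1v2v3` with lists of size `7m`: if it admits an
`(L, 4m)`-coloring, then there are an `m`-set `A ⊆ L(v1) \ L(v2)`, an `m`-set
`C ⊆ L(v3) \ L(v2)`, and a `2m`-set `B ⊆ L(v2)` containing an `m`-element subset
of `L(v2) \ L(v1)` and an `m`-element subset of `L(v2) \ L(v3)`. -/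
theorem stmt_8 (m : ℕ) (hm : 0 < m) (L1 L2 L3 : Finset ℕ)
    (hL1 : L1.card = 7 * m) (hL2 : L2.card = 7 * m) (hL3 : L3.card = 7 * m)
    (hcol : ∃ C1 C2 C3 : Finset ℕ, C1 ⊆ L1 ∧ C2 ⊆ L2 ∧ C3 ⊆ L3 ∧
      C1.card = 4 * m ∧ C2.card = 4 * m ∧ C3.card = 4 * m ∧
      Disjoint C1 C2 ∧ Disjoint C2 C3) :
    ∃ A C B B1 B2 : Finset ℕ,
      A ⊆ L1 \ L2 ∧ A.card = m ∧
      C ⊆ L3 \ L2 ∧ C.card = m ∧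
      B ⊆ L2 ∧ B.card = 2 * m ∧
      B1 ⊆ L2 \ L1 ∧ B1.card = m ∧ B1 ⊆ B ∧
      B2 ⊆ L2 \ L3 ∧ B2.card = m ∧ B2 ⊆ B := by
  obtain ⟨C1, C2, C3, h1, h2, h3, hc1, hc2, hc3, hd12, hd23⟩ := hcol
  -- A ⊆ C1 \ L2
  have hA' : m ≤ (C1 \ L2).card := aux_sdiff_card m C1 L2 C2 hc1 hL2 h2 hc2 hd12
  obtain ⟨A, hA1, hA2⟩ := Finset.exists_subset_card_eq hA'
  -- C ⊆ C3 \ L2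
  have hC' : m ≤ (C3 \ L2).card :=
    aux_sdiff_card m C3 L2 C2 hc3 hL2 h2 hc2 hd23.symm
  obtain ⟨C, hC1, hC2⟩ := Finset.exists_subset_card_eq hC'
  -- B1 ⊆ C2 \ L1
  have hB1' : m ≤ (C2 \ L1).card :=
    aux_sdiff_card m C2 L1 C1 hc2 hL1 h1 hc1 hd12.symm
  obtain ⟨B1, hB11, hB12⟩ := Finset.exists_subset_card_eq hB1'
  -- B2 ⊆ C2 \ L3
  have hB2' : m ≤ (C2 \ L3).card :=
    aux_sdiff_card m C2 L3 C3 hc2 hL3 h3 hc3 hd23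
  obtain ⟨B2, hB21, hB22⟩ := Finset.exists_subset_card_eq hB2'
  -- extend B1 ∪ B2 to B of size 2m inside L2
  have hBsub : B1 ∪ B2 ⊆ L2 := Finset.union_subset
    (fun x hx => h2 (Finset.mem_sdiff.1 (hB11 hx)).1)
    (fun x hx => h2 (Finset.mem_sdiff.1 (hB21 hx)).1)
  have hcardle : (B1 ∪ B2).card ≤ 2 * m := by
    have := Finset.card_union_le B1 B2
    omega
  obtain ⟨B, hB1sub, hBL2, hBcard⟩ :=
    Finset.exists_subsuperset_card_eq hBsub hcardle (by omega)
  refine ⟨A, C, B, B1, B2, ?_, hA2, ?_, hC2, hBL2, hBcard, ?_, hB12,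
    (Finset.subset_union_left).trans hB1sub, ?_, hB22,
    (Finset.subset_union_right).trans hB1sub⟩
  · exact hA1.trans (Finset.sdiff_subset_sdiff h1 le_rfl)
  · exact hC1.trans (Finset.sdiff_subset_sdiff h3 le_rfl)
  · exact hB11.trans (Finset.sdiff_subset_sdiff h2 le_rfl)
  · exact hB21.trans (Finset.sdiff_subset_sdiff h2 le_rfl)
end

section
/- Let G be a finite graph, L a list assignment, g : V(G) → ℕ, u a vertex, and v a neighbor of u. Suppose A ⊆ L(u) \ L(v) with |A| = k ≤ g(u). Define L'(w) = L(w) \ A for w ∈ N(u), L'(u) = L(u) \ A, L'(w) = L(w) otherwise, and g'(u) = g(u) − k, g'(w) = g(w) otherwise. If (G, L', g') admits an (L', g')-coloring φ, then assigning φ(u) ∪ A to u and φ(w) to all other vertices gives an (L, g)-coloring of G. Moreover |L'(v)| = |L(v)|. -/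
/-- Correctness of the saving operation `ParCol(u | v, k)`: pre-assign to `u` a set
`A ⊆ L(u) \ L(v)` of `k ≤ g(u)` colors, remove `A` from the lists of `u` and its
neighbors, and reduce `u`'s demand by `k`. Any coloring of the updated instance
extends (by adding `A` at `u`) to an `(L, g)`-coloring of `G`; moreover the list of
`v` is not shrunk. -/
theorem stmt_12 {V : Type*} [Fintype V] [DecidableEq V] (G : SimpleGraph V)
    [DecidableRel G.Adj] (L : V → Finset ℕ) (g : V → ℕ) (u v : V) (huv : G.Adj u v)
    (A : Finset ℕ) (k : ℕ) (hA : A ⊆ L u \ L v) (hk : A.card = k) (hkg : k ≤ g u)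
    (L' : V → Finset ℕ)
    (hL' : L' = fun w => if w = u ∨ G.Adj u w then L w \ A else L w)
    (g' : V → ℕ) (hg' : g' = fun w => if w = u then g u - k else g w)
    (φ : V → Finset ℕ)
    (hφsub : ∀ w, φ w ⊆ L' w) (hφcard : ∀ w, (φ w).card = g' w)
    (hφdisj : ∀ x y, G.Adj x y → Disjoint (φ x) (φ y)) :
    ((∀ w, (if w = u then φ u ∪ A else φ w) ⊆ L w) ∧
     (∀ w, (if w = u then φ u ∪ A else φ w).card = g w) ∧
     (∀ x y, G.Adj x y →
       Disjoint (if x = u then φ u ∪ A else φ x) (if y = u then φ u ∪ A else φ y))) ∧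
    (L' v).card = (L v).card := by
  subst hL' hg'
  have hALu : A ⊆ L u := fun a ha => (Finset.mem_sdiff.mp (hA ha)).1
  have hφu : φ u ⊆ L u \ A := by simpa using hφsub u
  have hφuA : Disjoint (φ u) A := by
    exact Finset.disjoint_left.mpr fun a ha => (Finset.mem_sdiff.mp (hφu ha)).2
  have hnbr : ∀ w, G.Adj u w → Disjoint (φ w) A := by
    intro w hw
    have := hφsub w
    simp only [hw, or_true, if_pos] at this
    exact Finset.disjoint_left.mpr fun a ha => (Finset.mem_sdiff.mp (this ha)).2
  refine ⟨⟨?_, ?_, ?_⟩, ?_⟩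
  · intro w
    by_cases hwu : w = u
    · rw [hwu, if_pos rfl]
      exact Finset.union_subset (hφu.trans (Finset.sdiff_subset)) hALu
    · have := hφsub w
      simp only [if_neg hwu] at this ⊢
      by_cases h : w = u ∨ G.Adj u w
      · simp only [h, if_pos] at this
        exact this.trans Finset.sdiff_subset
      · simpa [h] using this
  · intro w
    by_cases hwu : w = u
    · rw [hwu, if_pos rfl, Finset.card_union_of_disjoint hφuA, hφcard u, hk]
      simp [Nat.sub_add_cancel hkg]
    · simp only [if_neg hwu]
      have := hφcard w
      simpa [hwu] using this
  · intro x y hxy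
    have hne : x ≠ y := hxy.ne
    by_cases hx : x = u
    · have hyu : y ≠ u := hx ▸ hne.symm
      rw [hx] at hxy ⊢
      rw [if_pos rfl, if_neg hyu]
      exact Finset.disjoint_union_left.mpr ⟨hφdisj _ _ hxy, (hnbr y hxy).symm⟩
    · by_cases hy : y = u
      · rw [hy] at hxy ⊢
        rw [if_neg hx, if_pos rfl]
        exact Finset.disjoint_union_right.mpr ⟨hφdisj _ _ hxy, hnbr x hxy.symm⟩
      · simp only [if_neg hx, if_neg hy]
        exact hφdisj _ _ hxy
  · have hvu : v ≠ u := huv.ne.symm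
    have hALv : Disjoint A (L v) :=
      Finset.disjoint_left.mpr fun a ha => (Finset.mem_sdiff.mp (hA ha)).2
    simp [hvu, huv, Finset.sdiff_eq_self_of_disjoint hALv.symm]
end

section
/- Let G be a finite graph with an ordering on vertices, L a list assignment and g a demand function. Suppose u1, u2 are two nonadjacent vertices with a common neighbor v, and S ⊆ L(u1) \ L(v), T ⊆ L(u2) \ L(v), R ⊆ L(u1) ∩ L(u2) ∩ L(v) satisfy |S| + |T| + |R| = m, with S ∩ R = ∅ and T ∩ R = ∅, |S| + |R| ≤ g(u1), |T| + |R| ≤ g(u2). If |L(v)| ≥ g(v) + Σ_{w ∈ N(v)} g(w) − m, then after assigning S ∪ R to u1 and T ∪ R to u2 and updating the lists and demands accordingly, the updated list of v satisfies |L'(v)| ≥ g'(v) + Σ_{w ∈ N(v)} g'(w). -/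
/-- Legality computation for `ParCol({u1,u2} | v, m*)`: assigning `S ∪ R` to `u1` and
`T ∪ R` to `u2` (with `S ⊆ L(u1) \ L(v)`, `T ⊆ L(u2) \ L(v)`,
`R ⊆ L(u1) ∩ L(u2) ∩ L(v)` and `|S| + |T| + |R| = m`), and updating lists and demands,
turns the hypothesis `|L(v)| ≥ g(v) + Σ_{w ∈ N(v)} g(w) − m` into
`|L'(v)| ≥ g'(v) + Σ_{w ∈ N(v)} g'(w)`. -/
theorem stmt_13 {V : Type*} [Fintype V] [DecidableEq V] (G : SimpleGraph V)
    [DecidableRel G.Adj] (L : V → Finset ℕ) (g : V → ℕ) (u1 u2 v : V) (m : ℕ)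
    (h1 : G.Adj u1 v) (h2 : G.Adj u2 v) (hne : u1 ≠ u2) (hnadj : ¬ G.Adj u1 u2)
    (S T R : Finset ℕ)
    (hS : S ⊆ L u1 \ L v) (hT : T ⊆ L u2 \ L v) (hR : R ⊆ L u1 ∩ L u2 ∩ L v)
    (hm : S.card + T.card + R.card = m)
    (hSR : Disjoint S R) (hTR : Disjoint T R)
    (hg1 : S.card + R.card ≤ g u1) (hg2 : T.card + R.card ≤ g u2)
    (hleg : g v + ∑ w ∈ G.neighborFinset v, g w ≤ (L v).card + m)
    (g' : V → ℕ)
    (hg' : g' = fun w => if w = u1 then g u1 - (S.card + R.card)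
      else if w = u2 then g u2 - (T.card + R.card) else g w) :
    g' v + ∑ w ∈ G.neighborFinset v, g' w ≤ (L v \ ((S ∪ R) ∪ (T ∪ R))).card := by
  subst hg'
  have hv1 : v ≠ u1 := (G.ne_of_adj h1).symm
  have hv2 : v ≠ u2 := (G.ne_of_adj h2).symm
  have hRL : R ⊆ L v := hR.trans (by intro a ha; exact (Finset.mem_inter.mp ha).2)
  -- the resulting list is L v \ R
  have hset : L v \ ((S ∪ R) ∪ (T ∪ R)) = L v \ R := by
    ext a
    simp only [Finset.mem_sdiff, Finset.mem_union]
    constructor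
    · rintro ⟨haL, h⟩; exact ⟨haL, fun hr => h (Or.inl (Or.inr hr))⟩
    · rintro ⟨haL, haR⟩
      refine ⟨haL, ?_⟩
      rintro ((hs | hr) | (ht | hr))
      · exact (Finset.mem_sdiff.mp (hS hs)).2 haL
      · exact haR hr
      · exact (Finset.mem_sdiff.mp (hT ht)).2 haL
      · exact haR hr
  rw [hset, Finset.card_sdiff_of_subset hRL]
  have hu1 : u1 ∈ G.neighborFinset v := by simp [G.adj_symm h1]
  have hu2 : u2 ∈ (G.neighborFinset v).erase u1 := by
    exact Finset.mem_erase.mpr ⟨hne.symm, by simp [G.adj_symm h2]⟩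
  set N := G.neighborFinset v with hN
  have split1 : ∀ f : V → ℕ, ∑ w ∈ N, f w = f u1 + (f u2 + ∑ w ∈ (N.erase u1).erase u2, f w) := by
    intro f
    rw [← Finset.add_sum_erase _ _ hu1, ← Finset.add_sum_erase _ _ hu2]
  rw [split1] at hleg ⊢
  have hrest : ∑ w ∈ (N.erase u1).erase u2,
      (if w = u1 then g u1 - (S.card + R.card)
        else if w = u2 then g u2 - (T.card + R.card) else g w) =
      ∑ w ∈ (N.erase u1).erase u2, g w := by
    apply Finset.sum_congr rfl
    intro w hw
    have hw2 : w ≠ u2 := (Finset.mem_erase.mp hw).1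
    have hw1 : w ≠ u1 := (Finset.mem_erase.mp (Finset.mem_erase.mp hw).2).1
    simp [hw1, hw2]
  simp only [hrest, if_neg hv1, if_neg hv2, if_neg hne, if_neg hne.symm, if_pos rfl, if_true, ite_true, eq_self_iff_true]
  have hRc : R.card ≤ (L v).card := Finset.card_le_card hRL
  omega
end

section
/- Let m be a positive integer and let v1v2v3v4 be the path P4 with lists L(v1), …, L(v4) each of size 7m. If P4 admits an (L, 4m)-coloring, then there exist m-element sets A_i ⊆ L(v_i) \ L(v_{i+1}) for i ∈ {1,2,3} and m-element sets B_j ⊆ L(v_j) \ L(v_{j-1}) for j ∈ {2,3,4} such that A_3 ∩ B_2 = ∅. -/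
/-!
A colour set `C'` of size `4m` inside a list `L'` of size `7m` leaves only `3m` colours of `L'`
free, so at least `m` colours of any `4m`-set `C` disjoint from `C'` lie outside `L'`. Taking each
`A_i` inside `C(v_i)` and each `B_j` inside `C(v_j)` makes `A_3 ⊆ C(v_3)` and `B_2 ⊆ C(v_2)`
disjoint.
-/

namespace Finset

variable {α : Type*} [DecidableEq α] {C C' L' : Finset α}

lemma card_le_card_sdiff_add_card_sdiff (hd : Disjoint C C') :
    #C ≤ #(C \ L') + #(L' \ C') := by
  have hinter : C ∩ L' ⊆ L' \ C' := fun x hx =>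
    mem_sdiff.2 ⟨(mem_inter.1 hx).2, disjoint_left.1 hd (mem_inter.1 hx).1⟩
  calc #C = #(C \ L') + #(C ∩ L') := (card_sdiff_add_card_inter C L').symm
    _ ≤ #(C \ L') + #(L' \ C') := Nat.add_le_add_left (card_le_card hinter) _

lemma exists_subset_sdiff_card_eq {m : ℕ} (hC' : C' ⊆ L') (hd : Disjoint C C')
    (hcard : m + #L' ≤ #C + #C') : ∃ A ⊆ C \ L', #A = m := by
  have hle := card_le_card_sdiff_add_card_sdiff (L' := L') hd
  rw [card_sdiff_of_subset hC'] at hle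
  have hC'L' := card_le_card hC'
  exact exists_subset_card_eq (by omega)

end Finset

open Finset

theorem stmt_17_general (m : ℕ) (L1 L2 L3 L4 : Finset ℕ)
    (hL1 : L1.card = 7 * m) (hL2 : L2.card = 7 * m) (hL3 : L3.card = 7 * m)
    (hL4 : L4.card = 7 * m)
    (hcol : ∃ C1 C2 C3 C4 : Finset ℕ, C1 ⊆ L1 ∧ C2 ⊆ L2 ∧ C3 ⊆ L3 ∧ C4 ⊆ L4 ∧
      C1.card = 4 * m ∧ C2.card = 4 * m ∧ C3.card = 4 * m ∧ C4.card = 4 * m ∧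
      Disjoint C1 C2 ∧ Disjoint C2 C3 ∧ Disjoint C3 C4) :
    ∃ A1 A2 A3 B2 B3 B4 : Finset ℕ,
      A1 ⊆ L1 \ L2 ∧ A1.card = m ∧
      A2 ⊆ L2 \ L3 ∧ A2.card = m ∧
      A3 ⊆ L3 \ L4 ∧ A3.card = m ∧
      B2 ⊆ L2 \ L1 ∧ B2.card = m ∧
      B3 ⊆ L3 \ L2 ∧ B3.card = m ∧
      B4 ⊆ L4 \ L3 ∧ B4.card = m ∧
      A3 ∩ B2 = ∅ := by
  obtain ⟨C1, C2, C3, C4, h1, h2, h3, h4, c1, c2, c3, c4, d12, d23, d34⟩ := hcol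
  obtain ⟨A1, hA1, hA1c⟩ := exists_subset_sdiff_card_eq (m := m) h2 d12 (by omega)
  obtain ⟨A2, hA2, hA2c⟩ := exists_subset_sdiff_card_eq (m := m) h3 d23 (by omega)
  obtain ⟨A3, hA3, hA3c⟩ := exists_subset_sdiff_card_eq (m := m) h4 d34 (by omega)
  obtain ⟨B2, hB2, hB2c⟩ := exists_subset_sdiff_card_eq (m := m) h1 d12.symm (by omega)
  obtain ⟨B3, hB3, hB3c⟩ := exists_subset_sdiff_card_eq (m := m) h2 d23.symm (by omega)
  obtain ⟨B4, hB4, hB4c⟩ := exists_subset_sdiff_card_eq (m := m) h3 d34.symm (by omega)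
  have hA3B2 : Disjoint A3 B2 :=
    d23.symm.mono (hA3.trans sdiff_subset) (hB2.trans sdiff_subset)
  exact ⟨A1, A2, A3, B2, B3, B4,
    hA1.trans (sdiff_subset_sdiff h1 le_rfl), hA1c, hA2.trans (sdiff_subset_sdiff h2 le_rfl), hA2c,
    hA3.trans (sdiff_subset_sdiff h3 le_rfl), hA3c, hB2.trans (sdiff_subset_sdiff h2 le_rfl), hB2c,
    hB3.trans (sdiff_subset_sdiff h3 le_rfl), hB3c, hB4.trans (sdiff_subset_sdiff h4 le_rfl), hB4c,
    disjoint_iff_inter_eq_empty.1 hA3B2⟩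

/-- For the path `P4 = v1v2v3v4` with lists of size `7m`: if it admits an
`(L, 4m)`-coloring, then there exist `m`-sets `A_i ⊆ L(v_i) \ L(v_{i+1})` for
`i ∈ {1,2,3}` and `m`-sets `B_j ⊆ L(v_j) \ L(v_{j-1})` for `j ∈ {2,3,4}` with
`A_3 ∩ B_2 = ∅`. -/
theorem stmt_17 (m : ℕ) (hm : 0 < m) (L1 L2 L3 L4 : Finset ℕ)
    (hL1 : L1.card = 7 * m) (hL2 : L2.card = 7 * m) (hL3 : L3.card = 7 * m)
    (hL4 : L4.card = 7 * m)
    (hcol : ∃ C1 C2 C3 C4 : Finset ℕ, C1 ⊆ L1 ∧ C2 ⊆ L2 ∧ C3 ⊆ L3 ∧ C4 ⊆ L4 ∧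
      C1.card = 4 * m ∧ C2.card = 4 * m ∧ C3.card = 4 * m ∧ C4.card = 4 * m ∧
      Disjoint C1 C2 ∧ Disjoint C2 C3 ∧ Disjoint C3 C4) :
    ∃ A1 A2 A3 B2 B3 B4 : Finset ℕ,
      A1 ⊆ L1 \ L2 ∧ A1.card = m ∧
      A2 ⊆ L2 \ L3 ∧ A2.card = m ∧
      A3 ⊆ L3 \ L4 ∧ A3.card = m ∧
      B2 ⊆ L2 \ L1 ∧ B2.card = m ∧
      B3 ⊆ L3 \ L2 ∧ B3.card = m ∧
      B4 ⊆ L4 \ L3 ∧ B4.card = m ∧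
      A3 ∩ B2 = ∅ :=
  stmt_17_general m L1 L2 L3 L4 hL1 hL2 hL3 hL4 hcol
end
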